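/- Comparison theorem (easy direction): let P and Q be stochastic matrices on V with the same stationary law π, and κ > 0. If E_P(φ,φ) ≥ κ E_Q(φ,φ) for all φ : V → ℝ, then E_{ZRP(P,r,m)}(f,f) ≥ κ E_{ZRP(Q,r,m)}(f,f) for all f : Ω → ℝ. -/
import Mathlib


open Finset

variable (V : Type*) [Fintype V] [DecidableEq V]

/-- Product-form (unnormalized) stationary weight of a configuration. -/
noncomputable def weight (π : V → ℝ) (r : V → ℕ → ℝ) (η : V → ℕ) : ℝ :=
  ∏ x, ∏ k ∈ Finset.Icc 1 (η x), π x / r x k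

/-- Add one particle at site `x` : the configuration `η + δ_x`. -/
def addOne (η : V → ℕ) (x : V) : V → ℕ := Function.update η x (η x + 1)

/-- Move a particle from `x` to `y`: the configuration `η + δ_y - δ_x`. -/
def move (η : V → ℕ) (x y : V) : V → ℕ :=
  addOne V (Function.update η x (η x - 1)) y

/-- The set of configurations of `m` particles on `V`. -/
def configs (m : ℕ) : Finset (V → ℕ) :=
  (Fintype.piFinset fun _ : V => Finset.range (m + 1)).filter fun η => ∑ x, η x = m

/-- Single-particle Dirichlet form `⟨φ, (I - P) ψ⟩_π`. -/
noncomputable def EP (π : V → ℝ) (P : V → V → ℝ) (φ ψ : V → ℝ) : ℝ :=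
  ∑ x, ∑ y, π x * P x y * (φ x * (ψ x - ψ y))

/-- Zero-range Dirichlet form with jump matrix `P`, rates `r` and measure `μ`
on configurations with `m` particles. -/
noncomputable def EZRP (P : V → V → ℝ) (r : V → ℕ → ℝ) (μ : (V → ℕ) → ℝ) (m : ℕ)
    (f g : (V → ℕ) → ℝ) : ℝ :=
  ∑ η ∈ configs V m, ∑ x, ∑ y,
    μ η * r x (η x) * P x y * (f η * (g η - g (move V η x y)))

/-- Mean of an observable on `m`-particle configurations under `μ`. -/
noncomputable def meanOn (m : ℕ) (μ : (V → ℕ) → ℝ) (f : (V → ℕ) → ℝ) : ℝ :=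
  ∑ η ∈ configs V m, μ η * f η

/-- Variance of an observable on `m`-particle configurations under `μ`. -/
noncomputable def varOn (m : ℕ) (μ : (V → ℕ) → ℝ) (f : (V → ℕ) → ℝ) : ℝ :=
  meanOn V m μ (fun η => (f η) ^ 2) - (meanOn V m μ f) ^ 2

/-- Variance of `φ : V → ℝ` under the probability vector `π`. -/
noncomputable def varPi (π : V → ℝ) (φ : V → ℝ) : ℝ :=
  ∑ x, π x * (φ x) ^ 2 - (∑ x, π x * φ x) ^ 2

section Aux
variable (V : Type*) [Fintype V] [DecidableEq V]

lemma mem_configs_iff (m : ℕ) (η : V → ℕ) :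
    η ∈ configs V m ↔ ∑ x, η x = m := by
  simp only [configs, Finset.mem_filter, Fintype.mem_piFinset, Finset.mem_range,
    Nat.lt_succ_iff]
  constructor
  · exact fun h => h.2
  · intro h
    refine ⟨fun x => ?_, h⟩
    calc η x ≤ ∑ y, η y := Finset.single_le_sum (fun _ _ => Nat.zero_le _) (mem_univ x)
    _ = m := h

lemma addOne_mem (m : ℕ) (hm : 1 ≤ m) (ζ : V → ℕ) (hζ : ζ ∈ configs V (m-1)) (x : V) :
    addOne V ζ x ∈ configs V m := by
  rw [mem_configs_iff] at hζ ⊢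
  rw [addOne, Finset.sum_update_of_mem (mem_univ x), ← Finset.erase_eq]
  have := Finset.add_sum_erase Finset.univ ζ (mem_univ x)
  omega

lemma removeOne_mem (m : ℕ) (hm : 1 ≤ m) (η : V → ℕ) (hη : η ∈ configs V m) (x : V)
    (hx : η x ≠ 0) : Function.update η x (η x - 1) ∈ configs V (m-1) := by
  rw [mem_configs_iff] at hη ⊢
  rw [Finset.sum_update_of_mem (mem_univ x), ← Finset.erase_eq]
  have := Finset.add_sum_erase Finset.univ η (mem_univ x)
  omega

lemma addOne_removeOne (η : V → ℕ) (x : V) (hx : η x ≠ 0) :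
    addOne V (Function.update η x (η x - 1)) x = η := by
  simp only [addOne, Function.update_self, Function.update_idem]
  rw [Nat.sub_add_cancel (Nat.one_le_iff_ne_zero.2 hx), Function.update_eq_self]

lemma removeOne_addOne (ζ : V → ℕ) (x : V) :
    Function.update (addOne V ζ x) x (addOne V ζ x x - 1) = ζ := by
  simp only [addOne, Function.update_self, Function.update_idem, Nat.add_sub_cancel,
    Function.update_eq_self]

lemma reindex (m : ℕ) (hm : 1 ≤ m) (F : (V → ℕ) → V → ℝ)
    (h0 : ∀ η x, η x = 0 → F η x = 0) :
    ∑ η ∈ configs V m, ∑ x, F η x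
      = ∑ ζ ∈ configs V (m-1), ∑ x, F (addOne V ζ x) x := by
  rw [← Finset.sum_product' (f := fun η x => F η x),
      ← Finset.sum_product' (f := fun ζ x => F (addOne V ζ x) x)]
  rw [← Finset.sum_filter_of_ne (p := fun p : (V → ℕ) × V => p.1 p.2 ≠ 0)
      (fun p _ h => fun heq => h (h0 p.1 p.2 heq))]
  refine Finset.sum_nbij' (fun p => (Function.update p.1 p.2 (p.1 p.2 - 1), p.2))
    (fun p => (addOne V p.1 p.2, p.2)) ?_ ?_ ?_ ?_ ?_
  · rintro ⟨η, x⟩ hp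
    simp only [Finset.mem_filter, Finset.mem_product, Finset.mem_univ, and_true] at hp ⊢
    exact removeOne_mem V m hm η hp.1 x hp.2
  · rintro ⟨ζ, x⟩ hp
    simp only [Finset.mem_filter, Finset.mem_product, Finset.mem_univ, and_true] at hp ⊢
    refine ⟨addOne_mem V m hm ζ hp x, ?_⟩
    simp [addOne]
  · rintro ⟨η, x⟩ hp
    simp only [Finset.mem_filter, Finset.mem_product, Finset.mem_univ, and_true] at hp
    simp [addOne_removeOne V η x hp.2]
  · rintro ⟨ζ, x⟩ hp
    simp [removeOne_addOne]
  · rintro ⟨η, x⟩ hp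
    simp only [Finset.mem_filter, Finset.mem_product, Finset.mem_univ, and_true] at hp
    simp [addOne_removeOne V η x hp.2]

lemma weight_addOne (π : V → ℝ) (r : V → ℕ → ℝ) (ζ : V → ℕ) (x : V) :
    weight V π r (addOne V ζ x) = weight V π r ζ * (π x / r x (ζ x + 1)) := by
  unfold weight
  rw [← Finset.mul_prod_erase Finset.univ _ (Finset.mem_univ x),
      ← Finset.mul_prod_erase Finset.univ
        (fun y => ∏ k ∈ Finset.Icc 1 (ζ y), π y / r y k) (Finset.mem_univ x)]
  have h1 : (addOne V ζ x) x = ζ x + 1 := by simp [addOne]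
  have h2 : ∀ y ∈ Finset.univ.erase x, (addOne V ζ x) y = ζ y := by
    intro y hy
    simp [addOne, Function.update_of_ne (Finset.mem_erase.1 hy).1]
  have h3 : (∏ y ∈ Finset.univ.erase x, ∏ k ∈ Finset.Icc 1 ((addOne V ζ x) y), π y / r y k)
      = ∏ y ∈ Finset.univ.erase x, ∏ k ∈ Finset.Icc 1 (ζ y), π y / r y k :=
    Finset.prod_congr rfl fun y hy => by rw [h2 y hy]
  rw [h1, h3, Finset.prod_Icc_succ_top (by omega : 1 ≤ ζ x + 1)]
  ring

lemma weight_pos (π : V → ℝ) (hπ : ∀ x, 0 < π x) (r : V → ℕ → ℝ)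
    (hr : ∀ x k, 1 ≤ k → 0 < r x k) (ζ : V → ℕ) : 0 < weight V π r ζ := by
  refine Finset.prod_pos fun x _ => Finset.prod_pos fun k hk => ?_
  exact div_pos (hπ x) (hr x k (Finset.mem_Icc.1 hk).1)

lemma move_addOne (ζ : V → ℕ) (x y : V) :
    move V (addOne V ζ x) x y = addOne V ζ y := by
  rw [move, removeOne_addOne]

lemma EZRP_decomp (m : ℕ) (hm : 1 ≤ m)
    (π : V → ℝ) (hπ : ∀ x, 0 < π x)
    (P : V → V → ℝ)
    (r : V → ℕ → ℝ) (hr : ∀ x k, 1 ≤ k → 0 < r x k) (hr0 : ∀ x, r x 0 = 0)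
    (Z : ℝ) (hZ : 0 < Z)
    (μ : (V → ℕ) → ℝ) (hμ : ∀ η, μ η = weight V π r η / Z)
    (f : (V → ℕ) → ℝ) :
    EZRP V P r μ m f f = ∑ ζ ∈ configs V (m-1),
      (weight V π r ζ / Z) * EP V π P (fun z => f (addOne V ζ z)) (fun z => f (addOne V ζ z)) := by
  unfold EZRP
  rw [reindex V m hm _ (fun η x h => by simp [h, hr0])]
  refine Finset.sum_congr rfl fun ζ _ => ?_
  unfold EP
  rw [Finset.mul_sum]
  refine Finset.sum_congr rfl fun x _ => ?_
  rw [Finset.mul_sum]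
  refine Finset.sum_congr rfl fun y _ => ?_
  have h1 : (addOne V ζ x) x = ζ x + 1 := by simp [addOne]
  have hrne : r x (ζ x + 1) ≠ 0 := ne_of_gt (hr x (ζ x + 1) (by omega))
  rw [move_addOne, h1, hμ, weight_addOne]
  field_simp

end Aux

/-- comparison theorem, easy direction. -/
theorem zrp_comparison_easy
    (m : ℕ) (hm : 1 ≤ m)
    (π : V → ℝ) (hπ : ∀ x, 0 < π x) (hπ1 : ∑ x, π x = 1)
    (P Q : V → V → ℝ)
    (hP0 : ∀ x y, 0 ≤ P x y) (hProw : ∀ x, ∑ y, P x y = 1)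
    (hQ0 : ∀ x y, 0 ≤ Q x y) (hQrow : ∀ x, ∑ y, Q x y = 1)
    (hstatP : ∀ y, ∑ x, π x * P x y = π y)
    (hstatQ : ∀ y, ∑ x, π x * Q x y = π y)
    (r : V → ℕ → ℝ) (hr : ∀ x k, 1 ≤ k → 0 < r x k) (hr0 : ∀ x, r x 0 = 0)
    (Z : ℝ) (hZ : 0 < Z)
    (μ : (V → ℕ) → ℝ) (hμ : ∀ η, μ η = weight V π r η / Z)
    (κ : ℝ) (hκ : 0 < κ)
    (hcomp : ∀ φ : V → ℝ, κ * EP V π Q φ φ ≤ EP V π P φ φ) :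
    ∀ f : (V → ℕ) → ℝ, κ * EZRP V Q r μ m f f ≤ EZRP V P r μ m f f := by
  intro f
  rw [EZRP_decomp V m hm π hπ P r hr hr0 Z hZ μ hμ f,
      EZRP_decomp V m hm π hπ Q r hr hr0 Z hZ μ hμ f, Finset.mul_sum]
  refine Finset.sum_le_sum fun ζ _ => ?_
  have hc : 0 ≤ weight V π r ζ / Z := le_of_lt (div_pos (weight_pos V π hπ r hr ζ) hZ)
  calc κ * (weight V π r ζ / Z * EP V π Q (fun z => f (addOne V ζ z)) (fun z => f (addOne V ζ z)))
      = weight V π r ζ / Z * (κ * EP V π Q (fun z => f (addOne V ζ z)) (fun z => f (addOne V ζ z))) := by ring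
    _ ≤ _ := mul_le_mul_of_nonneg_left (hcomp _) hc
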